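/- Let F₀, F₁ : U → ℝ^k be feature maps on the grid U = ZMod Q × ZMod M such that F̂₁(ω)*F̂₀(ω) ≠ 0 for every ω ∈ U. For ρ ∈ [0,1] let F_ρ be the channelwise inverse discrete Fourier transform of F̂_ρ = (1−ρ)·F̂₀ + ρ·Ĝ, where Ĝ(ω) = F̂₁(ω) · (F̂₁(ω)*F̂₀(ω)) / |F̂₁(ω)*F̂₀(ω)|, and define G_ρ(i,j) = (1/|U|) Σ_{p∈U} F_ρ(p,i)·F_ρ(p,j) and S_ρ(p,n) = (1/|U|) Σ_{p'∈U} F_ρ(p',n)·F_ρ(p+p',n). Then: (a) each entry G_ρ(i,j) and each value S_ρ(p,n) is a polynomial function of ρ of degree at most 2, hence ρ ↦ G_ρ and ρ ↦ S_ρ are continuous on [0,1]; (b) at the endpoints, G_0 and S_0 are the Gram matrix and correlation of F₀, and G_1 and S_1 are the Gram matrix and correlation of F₁. (Proposition 2: the interpolated Gram matrix and correlation matrix connect those of the two inputs continuously.) -/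

import Mathlib

open Finset Complex

/-- The discrete Fourier transform of `g : ZMod Q × ZMod M → ℂ`. -/
noncomputable def dft (Q M : ℕ) [NeZero Q] [NeZero M]
    (g : ZMod Q × ZMod M → ℂ) (ω : ZMod Q × ZMod M) : ℂ :=
  ∑ p : ZMod Q × ZMod M, g p *
    Complex.exp (-(2 * Real.pi * Complex.I) *
      (((ω.1.val * p.1.val : ℕ) : ℂ) / (Q : ℂ) + ((ω.2.val * p.2.val : ℕ) : ℂ) / (M : ℂ)))

/-- The channelwise DFT of a real feature map `F : U → ℝ^k`. -/
noncomputable def cdft (Q M : ℕ) [NeZero Q] [NeZero M] {k : ℕ}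
    (F : ZMod Q × ZMod M → Fin k → ℝ) (ω : ZMod Q × ZMod M) (n : Fin k) : ℂ :=
  dft Q M (fun p => ((F p n : ℝ) : ℂ)) ω

/-- The inverse discrete Fourier transform of `h : ZMod Q × ZMod M → ℂ`. -/
noncomputable def idft (Q M : ℕ) [NeZero Q] [NeZero M]
    (h : ZMod Q × ZMod M → ℂ) (p : ZMod Q × ZMod M) : ℂ :=
  (∑ ω : ZMod Q × ZMod M, h ω *
    Complex.exp ((2 * Real.pi * Complex.I) *
      (((ω.1.val * p.1.val : ℕ) : ℂ) / (Q : ℂ) + ((ω.2.val * p.2.val : ℕ) : ℂ) / (M : ℂ)))) /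
    ((Q * M : ℕ) : ℂ)

/-- Hermitian inner product `a*b = Σ_n conj(a_n)·b_n` on `ℂ^k`. -/
noncomputable def cinner {k : ℕ} (a b : Fin k → ℂ) : ℂ :=
  ∑ n : Fin k, (starRingEnd ℂ) (a n) * b n

/-- The optimal-transport mixed spectrum
`Ĝ(ω) = F̂₁(ω)·(F̂₁(ω)*F̂₀(ω))/|F̂₁(ω)*F̂₀(ω)|`. -/
noncomputable def Ghat (Q M : ℕ) [NeZero Q] [NeZero M] {k : ℕ}
    (F₀ F₁ : ZMod Q × ZMod M → Fin k → ℝ) (ω : ZMod Q × ZMod M) (n : Fin k) : ℂ :=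
  cdft Q M F₁ ω n * cinner (cdft Q M F₁ ω) (cdft Q M F₀ ω) /
    ((‖cinner (cdft Q M F₁ ω) (cdft Q M F₀ ω)‖ : ℝ) : ℂ)


/-- The interpolated feature map `F_ρ`, i.e. the channelwise inverse DFT of
`F̂_ρ = (1−ρ)·F̂₀ + ρ·Ĝ`. -/
noncomputable def Fmix (Q M : ℕ) [NeZero Q] [NeZero M] {k : ℕ}
    (F₀ F₁ : ZMod Q × ZMod M → Fin k → ℝ) (ρ : ℝ)
    (p : ZMod Q × ZMod M) (n : Fin k) : ℂ :=
  idft Q M (fun ω =>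
    ((1 - ρ : ℝ) : ℂ) * cdft Q M F₀ ω n + ((ρ : ℝ) : ℂ) * Ghat Q M F₀ F₁ ω n) p

/-- The Gram matrix of the interpolated feature map `F_ρ`. -/
noncomputable def Gmix (Q M : ℕ) [NeZero Q] [NeZero M] {k : ℕ}
    (F₀ F₁ : ZMod Q × ZMod M → Fin k → ℝ) (ρ : ℝ) (i j : Fin k) : ℂ :=
  (∑ p : ZMod Q × ZMod M, Fmix Q M F₀ F₁ ρ p i * Fmix Q M F₀ F₁ ρ p j) /
    ((Q * M : ℕ) : ℂ)

/-- The correlation of the interpolated feature map `F_ρ` at offset `p`. -/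
noncomputable def Smix (Q M : ℕ) [NeZero Q] [NeZero M] {k : ℕ}
    (F₀ F₁ : ZMod Q × ZMod M → Fin k → ℝ) (ρ : ℝ)
    (p : ZMod Q × ZMod M) (n : Fin k) : ℂ :=
  (∑ p' : ZMod Q × ZMod M, Fmix Q M F₀ F₁ ρ p' n * Fmix Q M F₀ F₁ ρ (p + p') n) /
    ((Q * M : ℕ) : ℂ)

/-!
By linearity of the inverse DFT, `F_ρ = (1 - ρ) • F₀ + ρ • F'` with `F'` the inverse DFT of `Ĝ`.
Gram matrices and correlations are cross-correlations, which are bilinear, so they are quadratic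
in `ρ`. By the correlation theorem, the cross-correlation of two inverse DFTs only depends on the
products `h (-ω) * h' ω` of their spectra. As `F₀` and `F₁` are real, `F̂ (-ω) = conj (F̂ ω)`, so
the phase `c / |c|` of `Ĝ` at `-ω` is the conjugate of the one at `ω`; when `c ≠ 0` the two
cancel in `Ĝ (-ω) * Ĝ ω = F̂₁ (-ω) * F̂₁ ω`, and `F'` has the statistics of `F₁`.
-/

section CrossCorrelation

variable {G : Type*} [Add G] [Fintype G]

def crossCorr {R : Type*} [Semiring R] (f g : G → R) (p : G) : R := ∑ q, f q * g (p + q)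

lemma map_crossCorr {R S : Type*} [Semiring R] [Semiring S] (φ : R →+* S) (f g : G → R) (p : G) :
    φ (crossCorr f g p) = crossCorr (φ ∘ f) (φ ∘ g) p := by
  simp [crossCorr]

def IsQuadratic (f : ℝ → ℂ) : Prop := ∃ a b c : ℂ, ∀ ρ : ℝ, f ρ = a + b * ρ + c * ρ ^ 2

lemma IsQuadratic.div_const {f : ℝ → ℂ} (hf : IsQuadratic f) (z : ℂ) :
    IsQuadratic (fun ρ => f ρ / z) := by
  obtain ⟨a, b, c, hf⟩ := hf
  exact ⟨a / z, b / z, c / z, fun ρ => by simp only [hf]; ring⟩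

lemma IsQuadratic.continuous {f : ℝ → ℂ} (hf : IsQuadratic f) : Continuous f := by
  obtain ⟨a, b, c, hf⟩ := hf
  rw [funext hf]
  fun_prop

lemma isQuadratic_crossCorr_affine (f₀ f₁ g₀ g₁ : G → ℂ) (p : G) :
    IsQuadratic fun ρ => crossCorr (fun q => (1 - ρ) * f₀ q + ρ * f₁ q)
      (fun q => (1 - ρ) * g₀ q + ρ * g₁ q) p := by
  refine ⟨crossCorr f₀ g₀ p,
    crossCorr f₀ (g₁ - g₀) p + crossCorr (f₁ - f₀) g₀ p, crossCorr (f₁ - f₀) (g₁ - g₀) p,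
    fun ρ => ?_⟩
  simp only [crossCorr, Pi.sub_apply, sum_mul, ← sum_add_distrib]
  exact sum_congr rfl fun q _ => by ring

end CrossCorrelation

lemma AddChar.IsPrimitive.prod {R S R' : Type*} [CommRing R] [CommRing S] [CommMonoid R']
    {ψ : AddChar R R'} {φ : AddChar S R'} (hψ : ψ.IsPrimitive) (hφ : φ.IsPrimitive) :
    (ψ.compAddMonoidHom (AddMonoidHom.fst R S) *
      φ.compAddMonoidHom (AddMonoidHom.snd R S)).IsPrimitive := by
  intro a ha
  simp only [ne_eq, AddChar.eq_one_iff, AddChar.mulShift_apply, AddChar.mul_apply,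
    AddChar.compAddMonoidHom_apply, AddMonoidHom.coe_fst, AddMonoidHom.coe_snd, Prod.fst_mul,
    Prod.snd_mul, not_forall]
  by_cases ha₁ : a.1 = 0
  · have ha₂ : a.2 ≠ 0 := fun ha₂ => ha (Prod.ext ha₁ ha₂)
    obtain ⟨y, hy⟩ := not_forall.mp (mt AddChar.eq_one_iff.mpr (hφ ha₂))
    exact ⟨(0, y), by simpa using hy⟩
  · obtain ⟨x, hx⟩ := not_forall.mp (mt AddChar.eq_one_iff.mpr (hψ ha₁))
    exact ⟨(x, 0), by simpa using hx⟩

lemma ZMod.stdAddChar_mul_eq_exp {N : ℕ} [NeZero N] (a b : ZMod N) :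
    ZMod.stdAddChar (a * b) =
      exp (2 * Real.pi * I * (((a.val * b.val : ℕ) : ℂ) / N)) := by
  have hab : a * b = ((a.val * b.val : ℕ) : ZMod N) := by simp
  rw [hab, ZMod.stdAddChar_apply, ZMod.toCircle_natCast, mul_div_assoc]

section Fourier

variable (Q M : ℕ) [NeZero Q] [NeZero M]

/-- The DFT kernel `exp (2πi (ω₁p₁/Q + ω₂p₂/M))` is `gridChar (ω * p)`, the product being taken
in the ring `ZMod Q × ZMod M`. -/
noncomputable def gridChar : AddChar (ZMod Q × ZMod M) ℂ :=
  ZMod.stdAddChar.compAddMonoidHom (AddMonoidHom.fst _ _) *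
    ZMod.stdAddChar.compAddMonoidHom (AddMonoidHom.snd _ _)

lemma isPrimitive_gridChar : (gridChar Q M).IsPrimitive :=
  (ZMod.isPrimitive_stdAddChar Q).prod (ZMod.isPrimitive_stdAddChar M)

lemma gridChar_mul_eq_exp (ω p : ZMod Q × ZMod M) :
    gridChar Q M (ω * p) = exp (2 * Real.pi * I *
      (((ω.1.val * p.1.val : ℕ) : ℂ) / Q + ((ω.2.val * p.2.val : ℕ) : ℂ) / M)) := by
  simp only [gridChar, AddChar.mul_apply, AddChar.compAddMonoidHom_apply, AddMonoidHom.coe_fst,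
    AddMonoidHom.coe_snd, Prod.fst_mul, Prod.snd_mul, ZMod.stdAddChar_mul_eq_exp, ← exp_add,
    mul_add]

lemma dft_eq_sum_gridChar (g : ZMod Q × ZMod M → ℂ) (ω : ZMod Q × ZMod M) :
    dft Q M g ω = ∑ p, g p * gridChar Q M (-(p * ω)) :=
  sum_congr rfl fun p _ => by
    rw [mul_comm p ω, AddChar.map_neg_eq_inv, gridChar_mul_eq_exp, ← exp_neg, neg_mul]

lemma idft_eq_sum_gridChar (h : ZMod Q × ZMod M → ℂ) (p : ZMod Q × ZMod M) :
    idft Q M h p = (∑ ω, h ω * gridChar Q M (ω * p)) / ((Q * M : ℕ) : ℂ) := by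
  simp only [idft, gridChar_mul_eq_exp]

lemma sum_sum_mul_gridChar_mul_gridChar_neg (f : ZMod Q × ZMod M → ℂ) (z : ZMod Q × ZMod M) :
    ∑ x, (∑ y, f y * gridChar Q M (y * x)) * gridChar Q M (-(x * z)) =
      ((Q * M : ℕ) : ℂ) * f z := by
  have hchar : ∀ x y, gridChar Q M (y * x) * gridChar Q M (-(x * z)) =
      gridChar Q M (x * (y - z)) :=
    fun x y => by rw [← AddChar.map_add_eq_mul, mul_sub, mul_comm y, sub_eq_add_neg]
  simp only [sum_mul, mul_assoc, hchar]
  rw [sum_comm]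
  simp only [← mul_sum, AddChar.sum_mulShift _ (isPrimitive_gridChar Q M), sub_eq_zero,
    Fintype.card_prod, ZMod.card]
  simp only [Nat.cast_ite, Nat.cast_zero, mul_ite, mul_zero, sum_ite_eq', mem_univ, if_true,
    mul_comm]

lemma idft_dft (g : ZMod Q × ZMod M → ℂ) (p : ZMod Q × ZMod M) :
    idft Q M (dft Q M g) p = g p := by
  have hN : ((Q * M : ℕ) : ℂ) ≠ 0 := by simp [NeZero.ne]
  rw [idft_eq_sum_gridChar, ← Equiv.sum_comp (Equiv.neg _)]
  simp only [dft_eq_sum_gridChar, Equiv.neg_apply, mul_neg, neg_mul, neg_neg]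
  rw [sum_sum_mul_gridChar_mul_gridChar_neg, mul_div_cancel_left₀ _ hN]

lemma dft_idft (h : ZMod Q × ZMod M → ℂ) (ω : ZMod Q × ZMod M) :
    dft Q M (idft Q M h) ω = h ω := by
  have hN : ((Q * M : ℕ) : ℂ) ≠ 0 := by simp [NeZero.ne]
  simp only [dft_eq_sum_gridChar, idft_eq_sum_gridChar, div_mul_eq_mul_div, ← sum_div]
  rw [sum_sum_mul_gridChar_mul_gridChar_neg, mul_div_cancel_left₀ _ hN]

lemma sum_mul_gridChar_eq_dft_neg (f : ZMod Q × ZMod M → ℂ) (ω : ZMod Q × ZMod M) :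
    ∑ q, f q * gridChar Q M (q * ω) = dft Q M f (-ω) := by
  simp only [dft_eq_sum_gridChar, mul_neg, neg_neg]

lemma cdft_neg {k : ℕ} (F : ZMod Q × ZMod M → Fin k → ℝ) (ω : ZMod Q × ZMod M) (n : Fin k) :
    cdft Q M F (-ω) n = starRingEnd ℂ (cdft Q M F ω n) := by
  simp only [cdft, dft_eq_sum_gridChar, map_sum, map_mul, conj_ofReal,
    ← AddChar.map_neg_eq_conj, mul_neg]

lemma idft_cdft {k : ℕ} (F : ZMod Q × ZMod M → Fin k → ℝ) (n : Fin k) :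
    idft Q M (fun ω => cdft Q M F ω n) = fun p => (F p n : ℂ) :=
  funext (idft_dft Q M _)

lemma idft_mul_add_mul (a b : ℂ) (u v : ZMod Q × ZMod M → ℂ) (p : ZMod Q × ZMod M) :
    idft Q M (fun ω => a * u ω + b * v ω) p = a * idft Q M u p + b * idft Q M v p := by
  simp only [idft, add_mul, sum_add_distrib, mul_assoc, ← mul_sum]
  ring

lemma crossCorr_idft (h h' : ZMod Q × ZMod M → ℂ) (p : ZMod Q × ZMod M) :
    crossCorr (idft Q M h) (idft Q M h') p =
      (∑ ω, h (-ω) * h' ω * gridChar Q M (ω * p)) / ((Q * M : ℕ) : ℂ) := by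
  have hsplit : ∀ q, idft Q M h q * idft Q M h' (p + q) =
      (∑ ω, h' ω * gridChar Q M (ω * p) * (idft Q M h q * gridChar Q M (q * ω))) /
        ((Q * M : ℕ) : ℂ) := fun q => by
    rw [idft_eq_sum_gridChar Q M h', mul_div_assoc', mul_sum]
    congr 1
    exact sum_congr rfl fun ω _ => by
      rw [mul_add, AddChar.map_add_eq_mul, mul_comm q ω]; ring
  simp only [crossCorr, hsplit, ← sum_div]
  rw [sum_comm]
  congr 1
  refine sum_congr rfl fun ω _ => ?_
  rw [← mul_sum, sum_mul_gridChar_eq_dft_neg, dft_idft]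
  ring

end Fourier

lemma cinner_conj {k : ℕ} (a b : Fin k → ℂ) :
    cinner (fun n => starRingEnd ℂ (a n)) (fun n => starRingEnd ℂ (b n)) =
      starRingEnd ℂ (cinner a b) := by
  simp only [cinner, map_sum, map_mul]

section Mix

variable (Q M : ℕ) [NeZero Q] [NeZero M] {k : ℕ} (F₀ F₁ : ZMod Q × ZMod M → Fin k → ℝ)

lemma Ghat_neg_mul_Ghat {ω : ZMod Q × ZMod M}
    (hω : cinner (cdft Q M F₁ ω) (cdft Q M F₀ ω) ≠ 0) (n m : Fin k) :
    Ghat Q M F₀ F₁ (-ω) n * Ghat Q M F₀ F₁ ω m = cdft Q M F₁ (-ω) n * cdft Q M F₁ ω m := by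
  have hc_neg : cinner (cdft Q M F₁ (-ω)) (cdft Q M F₀ (-ω)) =
      starRingEnd ℂ (cinner (cdft Q M F₁ ω) (cdft Q M F₀ ω)) := by
    simp only [← cinner_conj, ← cdft_neg]
  have hnorm : ((‖cinner (cdft Q M F₁ ω) (cdft Q M F₀ ω)‖ : ℝ) : ℂ) ≠ 0 :=
    ofReal_ne_zero.mpr (norm_ne_zero_iff.mpr hω)
  rw [Ghat, Ghat, hc_neg, norm_conj]
  field_simp
  linear_combination (cdft Q M F₁ (-ω) n * cdft Q M F₁ ω m) *
    mul_conj' (cinner (cdft Q M F₁ ω) (cdft Q M F₀ ω))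

lemma Fmix_eq (ρ : ℝ) (p : ZMod Q × ZMod M) (n : Fin k) :
    Fmix Q M F₀ F₁ ρ p n =
      (1 - ρ) * F₀ p n + ρ * idft Q M (fun ω => Ghat Q M F₀ F₁ ω n) p := by
  rw [Fmix, idft_mul_add_mul, idft_cdft]
  push_cast
  rfl

lemma isQuadratic_crossCorr_Fmix (n m : Fin k) (p : ZMod Q × ZMod M) :
    IsQuadratic fun ρ =>
      crossCorr (fun q => Fmix Q M F₀ F₁ ρ q n) (fun q => Fmix Q M F₀ F₁ ρ q m) p := by
  simp only [Fmix_eq]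
  exact isQuadratic_crossCorr_affine _ _ _ _ p

lemma crossCorr_Fmix_zero (n m : Fin k) (p : ZMod Q × ZMod M) :
    crossCorr (fun q => Fmix Q M F₀ F₁ 0 q n) (fun q => Fmix Q M F₀ F₁ 0 q m) p =
      crossCorr (fun q => F₀ q n) (fun q => F₀ q m) p := by
  simp only [Fmix_eq, ofReal_zero, sub_zero, one_mul, zero_mul, add_zero]
  exact (map_crossCorr ofRealHom _ _ p).symm

lemma crossCorr_Fmix_one (h : ∀ ω, cinner (cdft Q M F₁ ω) (cdft Q M F₀ ω) ≠ 0)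
    (n m : Fin k) (p : ZMod Q × ZMod M) :
    crossCorr (fun q => Fmix Q M F₀ F₁ 1 q n) (fun q => Fmix Q M F₀ F₁ 1 q m) p =
      crossCorr (fun q => F₁ q n) (fun q => F₁ q m) p := by
  calc _ = crossCorr (idft Q M fun ω => Ghat Q M F₀ F₁ ω n)
        (idft Q M fun ω => Ghat Q M F₀ F₁ ω m) p := by
        simp only [Fmix_eq, ofReal_one, sub_self, zero_mul, one_mul, zero_add]
    _ = crossCorr (idft Q M fun ω => cdft Q M F₁ ω n)
        (idft Q M fun ω => cdft Q M F₁ ω m) p := by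
        simp only [crossCorr_idft, Ghat_neg_mul_Ghat Q M F₀ F₁ (h _)]
    _ = _ := by
        rw [idft_cdft, idft_cdft]
        exact (map_crossCorr ofRealHom _ _ p).symm

lemma Gmix_eq_crossCorr (ρ : ℝ) (i j : Fin k) :
    Gmix Q M F₀ F₁ ρ i j = crossCorr (fun q => Fmix Q M F₀ F₁ ρ q i)
      (fun q => Fmix Q M F₀ F₁ ρ q j) 0 / ((Q * M : ℕ) : ℂ) := by
  simp only [Gmix, crossCorr, zero_add]

lemma Smix_eq_crossCorr (ρ : ℝ) (p : ZMod Q × ZMod M) (n : Fin k) :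
    Smix Q M F₀ F₁ ρ p n = crossCorr (fun q => Fmix Q M F₀ F₁ ρ q n)
      (fun q => Fmix Q M F₀ F₁ ρ q n) p / ((Q * M : ℕ) : ℂ) :=
  rfl

end Mix

/-- Proposition 2: the interpolated Gram matrix `G_ρ` and correlation `S_ρ` are
quadratic polynomials in `ρ` (hence continuous on `[0,1]`), and at the endpoints
they coincide with the Gram matrices and correlations of the inputs `F₀`, `F₁`. -/
theorem Gmix_Smix_quadratic_continuous_and_endpoints
    (Q M : ℕ) [NeZero Q] [NeZero M] {k : ℕ}
    (F₀ F₁ : ZMod Q × ZMod M → Fin k → ℝ)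
    (h : ∀ ω : ZMod Q × ZMod M, cinner (cdft Q M F₁ ω) (cdft Q M F₀ ω) ≠ 0) :
    (∀ i j : Fin k, ∃ a b c : ℂ, ∀ ρ : ℝ,
      Gmix Q M F₀ F₁ ρ i j = a + b * (ρ : ℂ) + c * (ρ : ℂ) ^ 2) ∧
    (∀ i j : Fin k,
      ContinuousOn (fun ρ : ℝ => Gmix Q M F₀ F₁ ρ i j) (Set.Icc 0 1)) ∧
    (∀ (p : ZMod Q × ZMod M) (n : Fin k), ∃ a b c : ℂ, ∀ ρ : ℝ,
      Smix Q M F₀ F₁ ρ p n = a + b * (ρ : ℂ) + c * (ρ : ℂ) ^ 2) ∧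
    (∀ (p : ZMod Q × ZMod M) (n : Fin k),
      ContinuousOn (fun ρ : ℝ => Smix Q M F₀ F₁ ρ p n) (Set.Icc 0 1)) ∧
    (∀ i j : Fin k,
      Gmix Q M F₀ F₁ 0 i j =
        (((∑ p : ZMod Q × ZMod M, F₀ p i * F₀ p j) / ((Q * M : ℕ) : ℝ) : ℝ) : ℂ) ∧
      Gmix Q M F₀ F₁ 1 i j =
        (((∑ p : ZMod Q × ZMod M, F₁ p i * F₁ p j) / ((Q * M : ℕ) : ℝ) : ℝ) : ℂ)) ∧
    (∀ (p : ZMod Q × ZMod M) (n : Fin k),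
      Smix Q M F₀ F₁ 0 p n =
        (((∑ p' : ZMod Q × ZMod M, F₀ p' n * F₀ (p + p') n) / ((Q * M : ℕ) : ℝ) : ℝ) : ℂ) ∧
      Smix Q M F₀ F₁ 1 p n =
        (((∑ p' : ZMod Q × ZMod M, F₁ p' n * F₁ (p + p') n) / ((Q * M : ℕ) : ℝ) : ℝ) : ℂ)) := by
  have hG : ∀ i j, IsQuadratic fun ρ => Gmix Q M F₀ F₁ ρ i j := fun i j => by
    simpa only [Gmix_eq_crossCorr] using (isQuadratic_crossCorr_Fmix Q M F₀ F₁ i j 0).div_const _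
  have hS : ∀ p n, IsQuadratic fun ρ => Smix Q M F₀ F₁ ρ p n := fun p n => by
    simpa only [Smix_eq_crossCorr] using (isQuadratic_crossCorr_Fmix Q M F₀ F₁ n n p).div_const _
  refine ⟨hG, fun i j => (hG i j).continuous.continuousOn, hS,
    fun p n => (hS p n).continuous.continuousOn, fun i j => ⟨?_, ?_⟩, fun p n => ⟨?_, ?_⟩⟩
  · rw [Gmix_eq_crossCorr, crossCorr_Fmix_zero]
    push_cast [crossCorr, zero_add]
    rfl
  · rw [Gmix_eq_crossCorr, crossCorr_Fmix_one Q M F₀ F₁ h]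
    push_cast [crossCorr, zero_add]
    rfl
  · rw [Smix_eq_crossCorr, crossCorr_Fmix_zero]
    push_cast [crossCorr]
    rfl
  · rw [Smix_eq_crossCorr, crossCorr_Fmix_one Q M F₀ F₁ h]
    push_cast [crossCorr]
    rfl
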